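/- Let q = (Ψ, Θ, Φ) and let S(q) be the 3-1-3 Euler-angle kinematics matrix S(Ψ, Θ) = ![![0, cos Ψ, sin Ψ · sin Θ], ![0, −sin Ψ, cos Ψ · sin Θ], ![1, 0, cos Θ]]. Then for every q and every v ∈ ℝ³, Σᵢ₌₁³ vᵢ ∂_{qᵢ}S(q) + (S(q) v)^× · S(q) = [∂_{q₁}S(q)·v ∂_{q₂}S(q)·v ∂_{q₃}S(q)·v]. -/

import Mathlib

open Matrix

noncomputable section

/-- Cross-product matrix `v^×` of `v ∈ ℝ³`, satisfying `crossMat v *ᵥ w = v ×₃ w`. -/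
def crossMat (v : Fin 3 → ℝ) : Matrix (Fin 3) (Fin 3) ℝ :=
  !![0, -v 2, v 1; v 2, 0, -v 0; -v 1, v 0, 0]

/-- The 3×3 matrix `[u v w]` with columns `u`, `v`, `w`. -/
def colMat (u v w : Fin 3 → ℝ) : Matrix (Fin 3) (Fin 3) ℝ :=
  Matrix.of fun i j => ![u, v, w] j i

/-- `i`-th partial derivative `∂_{qᵢ} S (q)` of a matrix-valued map at `q`. -/
def pd (i : Fin 3) (S : (Fin 3 → ℝ) → Matrix (Fin 3) (Fin 3) ℝ) (q : Fin 3 → ℝ) :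
    Matrix (Fin 3) (Fin 3) ℝ :=
  Matrix.of fun j k => fderiv ℝ (fun p => S p j k) q (Pi.single i 1)

/-- `i`-th partial derivative of a vector-valued map at `q`. -/
def pdv (i : Fin 3) (f : (Fin 3 → ℝ) → (Fin 3 → ℝ)) (q : Fin 3 → ℝ) : Fin 3 → ℝ :=
  fun j => fderiv ℝ (fun p => f p j) q (Pi.single i 1)

/-- The `j`-th column `Sⱼ(q)` of `S q`. -/
def colF (S : (Fin 3 → ℝ) → Matrix (Fin 3) (Fin 3) ℝ) (j : Fin 3) (q : Fin 3 → ℝ) :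
    Fin 3 → ℝ :=
  fun i => S q i j

/-- The 3-1-3 Euler-angle kinematics matrix, as a function of `q = (Ψ, Θ, Φ)`. -/
def S313 (q : Fin 3 → ℝ) : Matrix (Fin 3) (Fin 3) ℝ :=
  !![0, Real.cos (q 0), Real.sin (q 0) * Real.sin (q 1);
     0, -Real.sin (q 0), Real.cos (q 0) * Real.sin (q 1);
     1, 0, Real.cos (q 1)]


def P3 (j : Fin 3) : (Fin 3 → ℝ) →L[ℝ] ℝ := ContinuousLinearMap.proj j

lemma hproj (j : Fin 3) (q : Fin 3 → ℝ) :
    HasFDerivAt (fun p : Fin 3 → ℝ => p j) (P3 j) q := (P3 j).hasFDerivAt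

lemma hcos (j : Fin 3) (q : Fin 3 → ℝ) :
    HasFDerivAt (fun p : Fin 3 → ℝ => Real.cos (p j)) (-Real.sin (q j) • P3 j) q :=
  (hproj j q).cos

lemma hsin (j : Fin 3) (q : Fin 3 → ℝ) :
    HasFDerivAt (fun p : Fin 3 → ℝ => Real.sin (p j)) (Real.cos (q j) • P3 j) q :=
  (hproj j q).sin

def A (q : Fin 3 → ℝ) : Matrix (Fin 3) (Fin 3) ℝ :=
  !![0, -Real.sin (q 0), Real.cos (q 0) * Real.sin (q 1);
     0, -Real.cos (q 0), -(Real.sin (q 0) * Real.sin (q 1));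
     0, 0, 0]

def B (q : Fin 3 → ℝ) : Matrix (Fin 3) (Fin 3) ℝ :=
  !![0, 0, Real.sin (q 0) * Real.cos (q 1);
     0, 0, Real.cos (q 0) * Real.cos (q 1);
     0, 0, -Real.sin (q 1)]

lemma pd_S313 (i : Fin 3) (q : Fin 3 → ℝ) :
    pd i S313 q = (Pi.single i 1 : Fin 3 → ℝ) 0 • A q + (Pi.single i 1 : Fin 3 → ℝ) 1 • B q := by
  ext j k
  fin_cases j <;> fin_cases k <;>
      simp [pd, S313, A, B, Matrix.vecHead, Matrix.vecTail]
  · rw [(hcos 0 q).fderiv]; simp [P3]; ring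
  · rw [(show HasFDerivAt (fun p : Fin 3 → ℝ => Real.sin (p 0) * Real.sin (p 1)) _ q from
      (hsin 0 q).mul (hsin 1 q)).fderiv]; simp [P3]; ring
  · rw [(hsin 0 q).fderiv]; simp [P3]; ring
  · rw [(show HasFDerivAt (fun p : Fin 3 → ℝ => Real.cos (p 0) * Real.sin (p 1)) _ q from
      (hcos 0 q).mul (hsin 1 q)).fderiv]; simp [P3]; ring
  · rw [(hcos 1 q).fderiv]; simp [P3]; ring

lemma pd0 (q : Fin 3 → ℝ) : pd 0 S313 q = A q := by simp [pd_S313]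

lemma pd1 (q : Fin 3 → ℝ) : pd 1 S313 q = B q := by
  rw [pd_S313]; simp [Pi.single_apply]

lemma pd2 (q : Fin 3 → ℝ) : pd 2 S313 q = 0 := by
  rw [pd_S313]; simp [Pi.single_apply]

set_option maxHeartbeats 1000000 in
theorem stmt_18 (q : Fin 3 → ℝ) (v : Fin 3 → ℝ) :
    ∑ i : Fin 3, v i • pd i S313 q + crossMat (S313 q *ᵥ v) * S313 q
      = colMat (pd 0 S313 q *ᵥ v) (pd 1 S313 q *ᵥ v) (pd 2 S313 q *ᵥ v) := by
  have hv : S313 q *ᵥ v = ![Real.cos (q 0) * v 1 + Real.sin (q 0) * Real.sin (q 1) * v 2,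
      -(Real.sin (q 0) * v 1) + Real.cos (q 0) * Real.sin (q 1) * v 2,
      v 0 + Real.cos (q 1) * v 2] := by
    funext i; fin_cases i <;> simp [S313, mulVec, dotProduct, Fin.sum_univ_three] <;> ring
  have hA : A q *ᵥ v = ![-(Real.sin (q 0) * v 1) + Real.cos (q 0) * Real.sin (q 1) * v 2,
      -(Real.cos (q 0) * v 1) - Real.sin (q 0) * Real.sin (q 1) * v 2, 0] := by
    funext i; fin_cases i <;> simp [A, mulVec, dotProduct, Fin.sum_univ_three] <;> ring
  have hB : B q *ᵥ v = ![Real.sin (q 0) * Real.cos (q 1) * v 2,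
      Real.cos (q 0) * Real.cos (q 1) * v 2, -(Real.sin (q 1) * v 2)] := by
    funext i; fin_cases i <;> simp [B, mulVec, dotProduct, Fin.sum_univ_three] <;> ring
  have h0 := Real.sin_sq_add_cos_sq (q 0)
  rw [Fin.sum_univ_three, pd0, pd1, pd2, hv, hA, hB, Matrix.zero_mulVec]
  ext i j
  fin_cases i <;> fin_cases j <;>
    simp [A, B, crossMat, colMat, S313, Matrix.mul_apply, Fin.sum_univ_three,
      Matrix.vecHead, Matrix.vecTail]
  all_goals try ring
  · linear_combination (-(Real.sin (q 1) * v 2)) * h0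
  · linear_combination (v 1 * Real.sin (q 1)) * h0
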